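/- Let Q : [0,T] → (0,1) be differentiable and satisfy the differential inequality Q'(t) ≤ C A(t) Q(t) √(|log Q(t)|) for an integrable nonnegative function A. Then for all t ∈ [0,T], √(|log Q(t)|) ≥ √(|log Q(0)|) − (C/2) ∫_0^t A(s) ds, and consequently Q(t) ≤ exp(−(√(|log Q(0)|) − (C/2)∫_0^t A(s) ds)_+^2). -/

import Mathlib

open Set Real

noncomputable section

/-- Kinetic Loeper-type Gronwall estimate: if `0 < Q < 1` satisfies
`Q' ≤ C A(t) Q √|log Q|`, then `√|log Q(t)| ≥ √|log Q(0)| - (C/2)∫₀ᵗ A`, and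
consequently `Q(t) ≤ exp(-((√|log Q(0)| - (C/2)∫₀ᵗ A)₊)²)`. -/
theorem kinetic_loeper_gronwall (T C : ℝ) (hT : 0 ≤ T) (hC : 0 ≤ C)
    (Q Q' A : ℝ → ℝ)
    (hA0 : ∀ t ∈ Icc 0 T, 0 ≤ A t)
    (hAint : MeasureTheory.IntegrableOn A (Icc 0 T))
    (hQrange : ∀ t ∈ Icc 0 T, Q t ∈ Ioo (0:ℝ) 1)
    (hQd : ∀ t ∈ Icc 0 T, HasDerivAt Q (Q' t) t)
    (hineq : ∀ t ∈ Icc 0 T, Q' t ≤ C * A t * Q t * Real.sqrt |Real.log (Q t)|) :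
    ∀ t ∈ Icc 0 T,
      Real.sqrt |Real.log (Q 0)| - (C / 2) * ∫ s in (0:ℝ)..t, A s
          ≤ Real.sqrt |Real.log (Q t)| ∧
      Q t ≤ Real.exp
          (-(max (Real.sqrt |Real.log (Q 0)| - (C / 2) * ∫ s in (0:ℝ)..t, A s) 0) ^ 2) := by
  intro t ht
  set R : ℝ → ℝ := fun x => Real.sqrt (-Real.log (Q x)) with hR
  have habs : ∀ x ∈ Icc 0 T, |Real.log (Q x)| = -Real.log (Q x) := by
    intro x hx
    exact abs_of_nonpos (Real.log_nonpos (hQrange x hx).1.le (hQrange x hx).2.le)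
  have hLpos : ∀ x ∈ Icc 0 T, 0 < -Real.log (Q x) := by
    intro x hx
    have := Real.log_neg (hQrange x hx).1 (hQrange x hx).2
    linarith
  -- derivative of R
  have hRd : ∀ x ∈ Icc 0 T,
      HasDerivAt R (1 / (2 * Real.sqrt (-Real.log (Q x))) * (-(Q' x / Q x))) x := by
    intro x hx
    have h1 : HasDerivAt (fun y => -Real.log (Q y)) (-(Q' x / Q x)) x :=
      ((hQd x hx).log (hQrange x hx).1.ne').neg
    exact (Real.hasDerivAt_sqrt (hLpos x hx).ne').comp x h1
  have hderiv_ge : ∀ x ∈ Icc 0 T,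
      -(C / 2 * A x) ≤ 1 / (2 * Real.sqrt (-Real.log (Q x))) * (-(Q' x / Q x)) := by
    intro x hx
    have hQpos := (hQrange x hx).1
    have hs : 0 < Real.sqrt (-Real.log (Q x)) := Real.sqrt_pos.2 (hLpos x hx)
    have h1 : Q' x ≤ C * A x * Q x * Real.sqrt (-Real.log (Q x)) := by
      have := hineq x hx; rwa [habs x hx] at this
    have h2 : -(Q' x / Q x) ≥ -(C * A x * Real.sqrt (-Real.log (Q x))) := by
      rw [ge_iff_le, neg_le_neg_iff, div_le_iff₀ hQpos]
      nlinarith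
    have h3 : (0:ℝ) < 2 * Real.sqrt (-Real.log (Q x)) := by positivity
    rw [ge_iff_le] at h2
    calc -(C / 2 * A x)
        = 1 / (2 * Real.sqrt (-Real.log (Q x))) *
            (-(C * A x * Real.sqrt (-Real.log (Q x)))) := by
          field_simp
      _ ≤ _ := by
          apply mul_le_mul_of_nonneg_left h2
          positivity
  have hsub : Icc (0:ℝ) t ⊆ Icc 0 T := Icc_subset_Icc le_rfl ht.2
  have hφint : MeasureTheory.IntegrableOn (fun s => -(C / 2 * A s)) (Icc 0 t) :=
    ((hAint.mono_set hsub).const_mul (C / 2)).neg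
  have key : (∫ y in (0:ℝ)..t, -(C / 2 * A y)) ≤ R t - R 0 := by
    apply intervalIntegral.integral_le_sub_of_hasDeriv_right_of_le ht.1
      (fun x hx => ((hRd x (hsub hx)).continuousAt).continuousWithinAt)
      (fun x hx => ((hRd x (hsub (Ioo_subset_Icc_self hx))).hasDerivWithinAt))
      hφint
      (fun x hx => hderiv_ge x (hsub (Ioo_subset_Icc_self hx)))
  have hint : (∫ y in (0:ℝ)..t, -(C / 2 * A y)) = -(C / 2 * ∫ s in (0:ℝ)..t, A s) := by
    rw [intervalIntegral.integral_neg, intervalIntegral.integral_const_mul]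
  rw [hint] at key
  have hRt : Real.sqrt |Real.log (Q t)| = R t := by rw [habs t ht]
  have hR0 : Real.sqrt |Real.log (Q 0)| = R 0 := by rw [habs 0 ⟨le_rfl, hT⟩]
  have part1 : Real.sqrt |Real.log (Q 0)| - (C / 2) * ∫ s in (0:ℝ)..t, A s
      ≤ Real.sqrt |Real.log (Q t)| := by
    rw [hRt, hR0]; linarith
  refine ⟨part1, ?_⟩
  set m := max (Real.sqrt |Real.log (Q 0)| - (C / 2) * ∫ s in (0:ℝ)..t, A s) 0 with hm
  have hm_le : m ≤ Real.sqrt |Real.log (Q t)| :=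
    max_le part1 (Real.sqrt_nonneg _)
  have hm0 : 0 ≤ m := le_max_right _ _
  have hsq : m ^ 2 ≤ Real.sqrt |Real.log (Q t)| ^ 2 := by
    apply pow_le_pow_left₀ hm0 hm_le
  rw [Real.sq_sqrt (abs_nonneg _), habs t ht] at hsq
  have : Real.log (Q t) ≤ -m ^ 2 := by linarith
  calc Q t = Real.exp (Real.log (Q t)) := (Real.exp_log (hQrange t ht).1).symm
    _ ≤ Real.exp (-m ^ 2) := Real.exp_le_exp.2 this

end
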